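/- Let ψ satisfy the weak scaling conditions with exponents 0 < δ₄ ≤ δ₅, a_t = (ψ⁻¹(1/t))^{1/2}, and suppose the kernel p(s,t,x) satisfies: for all r < t, ∫_{|z| ≥ a_{t-r}c} |q₁(r,t,z)|dz ≤ N(a_{t-r}c)^{-δ} where q₁(r,t,z) = (t-r)(a_{t-r})^{-d}(ψ(Δ)p)(r,t,(a_{t-r})^{-1}z) (equivalently the weighted L₂ bound on q₁ holds for fixed δ ∈ (0, δ₄ ∧ 1/2)). Then for 0 < s < t and c > 0: ∫ₛᵗ ∫_{|z| ≥ c} |ψ(Δ)p(r,t,z)| dz dr ≤ N(a_{t-s}c)^{-δ}, where N depends only on d, δ, and the scaling constants of ψ. -/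

import Mathlib

/-!
Integrate the single-time bound `∫_{|z| ≥ c} |ψ(Δ)p(r,t,z)| dz ≤ N (t-r)⁻¹ (a_{t-r} c)^{-δ}` over
`r ∈ (s, t)`. The weak upper scaling of `ψ` gives `a_{t-r} ≥ N ((t-r)/(t-s))^{-1/(2δ₅)} a_{t-s}`,
so the integrand is at most `N (a_{t-s} c)^{-δ} ((t-r)/(t-s))^{δ/(2δ₅)} (t-r)⁻¹`, and the last two
factors integrate to `2δ₅/δ` over `(s, t)`.
-/

open Real Set MeasureTheory Filter

/-- `genInv ψ` is the generalized inverse `ψ⁻¹` of the paper and `timeScale ψ u` its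
`a_u = (ψ⁻¹(1/u))^{1/2}`. -/
noncomputable def genInv (ψ : ℝ → ℝ) (y : ℝ) : ℝ := sInf {s : ℝ | 0 < s ∧ y ≤ ψ s}

noncomputable def timeScale (ψ : ℝ → ℝ) (u : ℝ) : ℝ := √(genInv ψ u⁻¹)

def LowerScaling (ψ : ℝ → ℝ) (N δ : ℝ) : Prop :=
  ∀ l₁ l₂ : ℝ, 0 < l₁ → l₁ ≤ l₂ → N * (l₂ / l₁) ^ δ ≤ ψ l₂ / ψ l₁

def UpperScaling (ψ : ℝ → ℝ) (N δ : ℝ) : Prop :=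
  ∀ l₁ l₂ : ℝ, 0 < l₁ → l₁ ≤ l₂ → ψ l₂ / ψ l₁ ≤ N * (l₂ / l₁) ^ δ

section Scaling

variable {ψ : ℝ → ℝ} {N₇ δ₄ N₈ δ₅ y s : ℝ}

lemma genInv_le (hs : 0 < s) (hy : y ≤ ψ s) : genInv ψ y ≤ s :=
  csInf_le ⟨0, fun _ hs => hs.1.le⟩ ⟨hs, hy⟩

lemma lt_of_lt_genInv (hs : 0 < s) (h : s < genInv ψ y) : ψ s < y :=
  not_le.1 fun hy => (genInv_le hs hy).not_gt h

lemma exists_lt_of_genInv_lt (hne : {s : ℝ | 0 < s ∧ y ≤ ψ s}.Nonempty) {x : ℝ}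
    (h : genInv ψ y < x) : ∃ s, 0 < s ∧ y ≤ ψ s ∧ s < x := by
  obtain ⟨s, ⟨hs, hys⟩, hsx⟩ := (csInf_lt_iff ⟨0, fun _ hs => hs.1.le⟩ hne).1 h
  exact ⟨s, hs, hys, hsx⟩

lemma LowerScaling.nonempty_superlevel (hlow : LowerScaling ψ N₇ δ₄) (hψ1 : 0 < ψ 1)
    (hN₇ : 0 < N₇) (hδ₄ : 0 < δ₄) (y : ℝ) : {s : ℝ | 0 < s ∧ y ≤ ψ s}.Nonempty := by
  have hgrowth : Tendsto (fun s : ℝ => N₇ * ψ 1 * s ^ δ₄) atTop atTop :=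
    (tendsto_rpow_atTop hδ₄).const_mul_atTop (by positivity)
  obtain ⟨s, hys, hs⟩ := ((hgrowth.eventually_ge_atTop y).and (eventually_ge_atTop 1)).exists
  refine ⟨s, one_pos.trans_le hs, hys.trans ?_⟩
  have := hlow 1 s one_pos hs
  rw [div_one, le_div_iff₀ hψ1] at this
  linarith

lemma LowerScaling.genInv_pos (hlow : LowerScaling ψ N₇ δ₄) (hψ1 : 0 < ψ 1) (hN₇ : 0 < N₇)
    (hδ₄ : 0 < δ₄) (hy : 0 < y) : 0 < genInv ψ y := by
  have hbound : ∀ s ∈ {s : ℝ | 0 < s ∧ y ≤ ψ s}, min 1 ((N₇ * y / ψ 1) ^ δ₄⁻¹) ≤ s := by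
    rintro s ⟨hs, hys⟩
    rcases le_or_gt 1 s with hs1 | hs1
    · exact (min_le_left _ _).trans hs1
    refine (min_le_right _ _).trans ((Real.rpow_inv_le_iff_of_pos (by positivity) hs.le hδ₄).2 ?_)
    have hψs : 0 < ψ s := hy.trans_le hys
    have := hlow s 1 hs hs1.le
    rw [one_div, inv_rpow hs.le, le_div_iff₀ hψs] at this
    rw [div_le_iff₀ hψ1]
    calc N₇ * y ≤ N₇ * ψ s := by gcongr
      _ = N₇ * (s ^ δ₄)⁻¹ * ψ s * s ^ δ₄ := by field_simp
      _ ≤ ψ 1 * s ^ δ₄ := by gcongr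
      _ = s ^ δ₄ * ψ 1 := mul_comm _ _
  exact (lt_min one_pos (by positivity)).trans_le
    (le_csInf (hlow.nonempty_superlevel hψ1 hN₇ hδ₄ y) hbound)

/-- The constant comes from comparing `ψ` at a point `s' < 2 genInv ψ y₁` of the level set of `y₁`
and at `genInv ψ y₂ / 2`, which lies below the level `y₂`. -/
lemma UpperScaling.genInv_le_mul (hup : UpperScaling ψ N₈ δ₅) (hpos : ∀ x, 0 < x → 0 < ψ x)
    (hN₈ : 0 < N₈) (hδ₅ : 0 < δ₅) {y₁ y₂ : ℝ} (hy : y₂ ≤ y₁)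
    (hne : {s : ℝ | 0 < s ∧ y₁ ≤ ψ s}.Nonempty) (hb : 0 < genInv ψ y₂) :
    genInv ψ y₂ ≤ 4 * (N₈ * (y₂ / y₁)) ^ δ₅⁻¹ * genInv ψ y₁ := by
  set a := genInv ψ y₁
  set b := genInv ψ y₂
  have hba : b ≤ a := le_csInf hne fun s hs => genInv_le hs.1 (hy.trans hs.2)
  have ha : 0 < a := hb.trans_le hba
  obtain ⟨s', hs', hys', hs'a⟩ := exists_lt_of_genInv_lt hne (by linarith : a < 2 * a)
  have hbs' : b ≤ s' := genInv_le hs' (hy.trans hys')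
  have hψb : ψ (b / 2) < y₂ := lt_of_lt_genInv (half_pos hb) (half_lt_self hb)
  have hψb0 : 0 < ψ (b / 2) := hpos _ (half_pos hb)
  have hy₂ : 0 < y₂ := hψb0.trans hψb
  have hy₁ : 0 < y₁ := hy₂.trans_le hy
  have hscaled : y₁ / y₂ ≤ N₈ * (4 * a / b) ^ δ₅ := calc
    y₁ / y₂ ≤ ψ s' / ψ (b / 2) := div_le_div₀ (hpos s' hs').le hys' hψb0 hψb.le
    _ ≤ N₈ * (s' / (b / 2)) ^ δ₅ := hup _ _ (half_pos hb) (by linarith)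
    _ ≤ N₈ * (4 * a / b) ^ δ₅ := by
      have : s' / (b / 2) ≤ 4 * a / b := by
        rw [div_div_eq_mul_div, div_le_div_iff_of_pos_right hb]
        linarith
      gcongr
  have hratio : b / (4 * a) ≤ (N₈ * (y₂ / y₁)) ^ δ₅⁻¹ := by
    rw [Real.le_rpow_inv_iff_of_pos (by positivity) (by positivity) hδ₅, ← inv_div,
      inv_rpow (by positivity), inv_le_comm₀ (by positivity) (by positivity), mul_inv, inv_div]
    exact (inv_mul_le_iff₀ hN₈).2 hscaled
  calc b = 4 * a * (b / (4 * a)) := by field_simp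
    _ ≤ 4 * a * (N₈ * (y₂ / y₁)) ^ δ₅⁻¹ := by gcongr
    _ = _ := by ring

lemma timeScale_mul_rpow_neg_le (hlow : LowerScaling ψ N₇ δ₄) (hup : UpperScaling ψ N₈ δ₅)
    (hpos : ∀ x, 0 < x → 0 < ψ x) (hN₇ : 0 < N₇) (hδ₄ : 0 < δ₄) (hN₈ : 0 < N₈) (hδ₅ : 0 < δ₅)
    {u v c δ : ℝ} (hu : 0 < u) (huv : u ≤ v) (hc : 0 < c) (hδ : 0 ≤ δ) :
    (timeScale ψ u * c) ^ (-δ) ≤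
      4 ^ (δ / 2) * N₈ ^ (δ / (2 * δ₅)) * (u / v) ^ (δ / (2 * δ₅)) *
        (timeScale ψ v * c) ^ (-δ) := by
  have hψ1 := hpos 1 one_pos
  have hv : 0 < v := hu.trans_le huv
  have hau := hlow.genInv_pos hψ1 hN₇ hδ₄ (inv_pos.2 hu)
  have hav := hlow.genInv_pos hψ1 hN₇ hδ₄ (inv_pos.2 hv)
  have hratio := hup.genInv_le_mul hpos hN₈ hδ₅ (inv_anti₀ hu huv)
    (hlow.nonempty_superlevel hψ1 hN₇ hδ₄ u⁻¹) hav
  rw [inv_div_inv] at hratio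
  set k := 4 * (N₈ * (u / v)) ^ δ₅⁻¹
  have hk : 0 < k := by positivity
  have htu : 0 < timeScale ψ u * c := mul_pos (sqrt_pos.2 hau) hc
  have htv : 0 < timeScale ψ v * c := mul_pos (sqrt_pos.2 hav) hc
  have hscale : timeScale ψ v * c ≤ √k * (timeScale ψ u * c) := by
    rw [← mul_assoc, timeScale, timeScale, ← sqrt_mul hk.le]
    gcongr
  calc (timeScale ψ u * c) ^ (-δ)
      = √k ^ δ * (√k * (timeScale ψ u * c)) ^ (-δ) := by
        rw [mul_rpow (sqrt_nonneg k) htu.le, rpow_neg (sqrt_nonneg k), ← mul_assoc,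
          mul_inv_cancel₀ (by positivity), one_mul]
    _ ≤ √k ^ δ * (timeScale ψ v * c) ^ (-δ) :=
        mul_le_mul_of_nonneg_left (rpow_le_rpow_of_nonpos htv hscale (neg_nonpos.2 hδ))
          (by positivity)
    _ = _ := by
        rw [sqrt_eq_rpow, ← rpow_mul hk.le, mul_rpow (by norm_num) (by positivity),
          ← rpow_mul (by positivity), mul_rpow hN₈.le (by positivity)]
        ring_nf

end Scaling

lemma integral_Ioo_sub_rpow {s t β : ℝ} (hst : s ≤ t) (hβ : 0 < β) :
    ∫ r in Ioo s t, (t - r) ^ (β - 1) = (t - s) ^ β / β := by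
  rw [← integral_Ioc_eq_integral_Ioo, ← intervalIntegral.integral_of_le hst,
    intervalIntegral.integral_comp_sub_left (fun x : ℝ => x ^ (β - 1)) t, sub_self,
    integral_rpow (Or.inl (by linarith)), sub_add_cancel, zero_rpow hβ.ne', sub_zero]

lemma integrableOn_Ioo_sub_rpow {s t β : ℝ} (hst : s ≤ t) (hβ : 0 < β) :
    IntegrableOn (fun r => (t - r) ^ (β - 1)) (Ioo s t) := by
  have h := ((intervalIntegral.intervalIntegrable_rpow' (r := β - 1) (by linarith)
    (a := 0) (b := t - s)).comp_sub_left t).symm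
  rw [sub_sub_cancel, sub_zero, intervalIntegrable_iff_integrableOn_Ioc_of_le hst] at h
  exact h.mono_set Ioo_subset_Ioc_self

lemma setIntegral_Ioo_le_of_le_rpow_mul_inv {F : ℝ → ℝ} {s t β M : ℝ} (hst : s < t)
    (hβ : 0 < β) (hF₀ : ∀ r ∈ Ioo s t, 0 ≤ F r)
    (hF : ∀ r ∈ Ioo s t, F r ≤ M * ((t - r) / (t - s)) ^ β * (t - r)⁻¹) :
    ∫ r in Ioo s t, F r ≤ M / β := by
  have hv : 0 < t - s := sub_pos.2 hst
  have hF' : ∀ r ∈ Ioo s t, F r ≤ M / (t - s) ^ β * (t - r) ^ (β - 1) := by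
    intro r hr
    have hu : 0 < t - r := sub_pos.2 hr.2
    convert hF r hr using 1
    rw [rpow_sub_one hu.ne', div_rpow hu.le hv.le]
    ring
  calc ∫ r in Ioo s t, F r ≤ ∫ r in Ioo s t, M / (t - s) ^ β * (t - r) ^ (β - 1) :=
        integral_mono_of_nonneg ((ae_restrict_iff' measurableSet_Ioo).2 (ae_of_all _ hF₀))
          ((integrableOn_Ioo_sub_rpow hst.le hβ).const_mul _)
          ((ae_restrict_iff' measurableSet_Ioo).2 (ae_of_all _ hF'))
    _ = M / β := by
        rw [integral_const_mul, integral_Ioo_sub_rpow hst.le hβ]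
        field_simp

theorem stmt_18_general {d : ℕ} (ψ : ℝ → ℝ) (δ₄ δ₅ N₇ N₈ δ : ℝ)
    (hδ₄ : 0 < δ₄) (hδ45 : δ₄ ≤ δ₅) (hN₇ : 0 < N₇) (hN₈ : 0 < N₈)
    (hδ : 0 < δ)
    (hpos : ∀ x : ℝ, 0 < x → 0 < ψ x)
    (hscale : ∀ l₁ l₂ : ℝ, 0 < l₁ → l₁ ≤ l₂ →
      N₇ * (l₂ / l₁) ^ δ₄ ≤ ψ l₂ / ψ l₁ ∧ ψ l₂ / ψ l₁ ≤ N₈ * (l₂ / l₁) ^ δ₅)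
    (P : ℝ → ℝ → EuclideanSpace ℝ (Fin d) → ℝ)
    (Nq : ℝ) (hNq : 0 < Nq)
    (hP : ∀ r t c : ℝ, 0 < r → r < t → 0 < c →
      (∫ z in {z : EuclideanSpace ℝ (Fin d) | c ≤ ‖z‖}, |P r t z|) ≤
        Nq * (t - r)⁻¹ *
          (Real.sqrt (sInf {s : ℝ | 0 < s ∧ (t - r)⁻¹ ≤ ψ s}) * c) ^ (-δ)) :
    ∃ N : ℝ, 0 < N ∧ ∀ s t c : ℝ, 0 < s → s < t → 0 < c →
      (∫ r in Set.Ioo s t, ∫ z in {z : EuclideanSpace ℝ (Fin d) | c ≤ ‖z‖},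
        |P r t z|) ≤
        N * (Real.sqrt (sInf {s' : ℝ | 0 < s' ∧ (t - s)⁻¹ ≤ ψ s'}) * c) ^ (-δ) := by
  have hδ₅ : 0 < δ₅ := hδ₄.trans_le hδ45
  have hlow : LowerScaling ψ N₇ δ₄ := fun l₁ l₂ h₁ h₂ => (hscale l₁ l₂ h₁ h₂).1
  have hup : UpperScaling ψ N₈ δ₅ := fun l₁ l₂ h₁ h₂ => (hscale l₁ l₂ h₁ h₂).2
  set β := δ / (2 * δ₅)
  have hβ : 0 < β := by positivity
  set K := 4 ^ (δ / 2) * N₈ ^ β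
  refine ⟨Nq * K / β, by positivity, fun s t c hs hst hc => ?_⟩
  rw [div_mul_eq_mul_div]
  refine setIntegral_Ioo_le_of_le_rpow_mul_inv hst hβ
    (fun r _ => integral_nonneg fun _ => abs_nonneg _) fun r hr => ?_
  have hu : 0 < t - r := sub_pos.2 hr.2
  calc _ ≤ Nq * (t - r)⁻¹ * (timeScale ψ (t - r) * c) ^ (-δ) := hP r t c (hs.trans hr.1) hr.2 hc
    _ ≤ Nq * (t - r)⁻¹ * (K * ((t - r) / (t - s)) ^ β * (timeScale ψ (t - s) * c) ^ (-δ)) := by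
        gcongr
        exact timeScale_mul_rpow_neg_le hlow hup hpos hN₇ hδ₄ hN₈ hδ₅ hu
          (sub_le_sub_left hr.1.le t) hc hδ.le
    _ = Nq * K * (timeScale ψ (t - s) * c) ^ (-δ) * ((t - r) / (t - s)) ^ β * (t - r)⁻¹ := by
        ring

/-- Tail estimate for the kernel `ψ(Δ)p`: from the rescaled single-time bound
`∫_{|z| ≥ c} |ψ(Δ)p(r,t,z)| dz ≤ N (t-r)⁻¹ (a_{t-r} c)^{-δ}` one gets
`∫ₛᵗ ∫_{|z|≥c} |ψ(Δ)p(r,t,z)| dz dr ≤ N (a_{t-s} c)^{-δ}`,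
where `a_u = (ψ⁻¹(1/u))^{1/2}`. -/
theorem stmt_18 {d : ℕ} (ψ : ℝ → ℝ) (δ₄ δ₅ N₇ N₈ δ : ℝ)
    (hδ₄ : 0 < δ₄) (hδ45 : δ₄ ≤ δ₅) (hN₇ : 0 < N₇) (hN₈ : 0 < N₈)
    (hδ : 0 < δ) (hδ' : δ < min δ₄ (1 / 2))
    (hpos : ∀ x : ℝ, 0 < x → 0 < ψ x)
    (hmono : ∀ x y : ℝ, 0 < x → x ≤ y → ψ x ≤ ψ y)
    (hscale : ∀ l₁ l₂ : ℝ, 0 < l₁ → l₁ ≤ l₂ →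
      N₇ * (l₂ / l₁) ^ δ₄ ≤ ψ l₂ / ψ l₁ ∧ ψ l₂ / ψ l₁ ≤ N₈ * (l₂ / l₁) ^ δ₅)
    (P : ℝ → ℝ → EuclideanSpace ℝ (Fin d) → ℝ)
    (Nq : ℝ) (hNq : 0 < Nq)
    (hP : ∀ r t c : ℝ, 0 < r → r < t → 0 < c →
      (∫ z in {z : EuclideanSpace ℝ (Fin d) | c ≤ ‖z‖}, |P r t z|) ≤
        Nq * (t - r)⁻¹ *
          (Real.sqrt (sInf {s : ℝ | 0 < s ∧ (t - r)⁻¹ ≤ ψ s}) * c) ^ (-δ)) :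
    ∃ N : ℝ, 0 < N ∧ ∀ s t c : ℝ, 0 < s → s < t → 0 < c →
      (∫ r in Set.Ioo s t, ∫ z in {z : EuclideanSpace ℝ (Fin d) | c ≤ ‖z‖},
        |P r t z|) ≤
        N * (Real.sqrt (sInf {s' : ℝ | 0 < s' ∧ (t - s)⁻¹ ≤ ψ s'}) * c) ^ (-δ) :=
  stmt_18_general ψ δ₄ δ₅ N₇ N₈ δ hδ₄ hδ45 hN₇ hN₈ hδ hpos hscale P Nq hNq hP
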